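/- arXiv:2104.03357 — 2 statements merged into one kernel-verified Lean document; each statement's English description precedes it below -/
import Mathlib

section
/- Let a, c, μ > 0 with a² > 4c² + 5ac, and define V₀(λ) = μ·√(c² + 2ca·cos λ + a²) and V₁(λ) = μ·(c·cos λ + a)/√(c² + 2ca·cos λ + a²). If the energy E satisfies μ(c + a) < E < μ·(a/2)·(a − c)/(a + c) + μ(a − c), then for every λ ∈ ℝ: E > V₀(λ) and (a/2)·V₁(λ) + V₀(λ) > E. -/
open Real

/-- Off-center circular scatterer in the linear potential: under the geometric
condition `a² > 4c² + 5ac`, if `μ(c+a) < E < μ(a/2)(a−c)/(a+c) + μ(a−c)`,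
then along the whole boundary `E > V₀` and `(a/2)V₁ + V₀ > E`. -/
theorem stmt_8 (a c μ E : ℝ) (ha : 0 < a) (hc : 0 < c) (hμ : 0 < μ)
    (hgeom : a ^ 2 > 4 * c ^ 2 + 5 * a * c)
    (V₀ V₁ : ℝ → ℝ)
    (hV₀ : ∀ lam, V₀ lam = μ * Real.sqrt (c ^ 2 + 2 * c * a * Real.cos lam + a ^ 2))
    (hV₁ : ∀ lam, V₁ lam = μ * (c * Real.cos lam + a) /
        Real.sqrt (c ^ 2 + 2 * c * a * Real.cos lam + a ^ 2))
    (hElow : μ * (c + a) < E)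
    (hEhigh : E < μ * (a / 2) * (a - c) / (a + c) + μ * (a - c)) :
    ∀ lam : ℝ, E > V₀ lam ∧ (a / 2) * V₁ lam + V₀ lam > E := by
  intro lam
  have hac : c < a := by nlinarith
  set t := Real.cos lam with htdef
  have ht1 : -1 ≤ t := Real.neg_one_le_cos lam
  have ht2 : t ≤ 1 := Real.cos_le_one lam
  set Q := c ^ 2 + 2 * c * a * t + a ^ 2 with hQdef
  have hQ0 : 0 ≤ Q := by nlinarith
  set s := Real.sqrt Q with hsdef
  have hs0 : 0 ≤ s := Real.sqrt_nonneg _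
  have hs2 : s ^ 2 = Q := Real.sq_sqrt hQ0
  have hsle : s ≤ c + a := by
    calc s ≤ Real.sqrt ((c + a) ^ 2) := Real.sqrt_le_sqrt (by nlinarith [mul_nonneg (mul_pos hc ha).le (by linarith : (0:ℝ) ≤ 1 - t)])
      _ = c + a := Real.sqrt_sq (by linarith)
  have hsge : a - c ≤ s := by
    calc a - c = Real.sqrt ((a - c) ^ 2) := (Real.sqrt_sq (by linarith)).symm
      _ ≤ s := Real.sqrt_le_sqrt (by nlinarith [mul_nonneg (mul_pos hc ha).le (by linarith : (0:ℝ) ≤ 1 + t)])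
  have hspos : 0 < s := lt_of_lt_of_le (by linarith) hsge
  constructor
  · rw [hV₀]
    calc μ * s ≤ μ * (c + a) := by nlinarith
      _ < E := hElow
  · rw [hV₀, hV₁]
    have hnum : c * t + a ≤ s := by nlinarith
    have hratio : (a - c) / (a + c) ≤ (c * t + a) / s := by
      rw [div_le_div_iff₀ (by linarith) hspos]
      nlinarith
    have h1 : μ * (a / 2) * (a - c) / (a + c) ≤ a / 2 * (μ * (c * t + a) / s) := by
      have := mul_le_mul_of_nonneg_left hratio (by positivity : (0:ℝ) ≤ μ * (a / 2))
      calc μ * (a / 2) * (a - c) / (a + c) = μ * (a / 2) * ((a - c) / (a + c)) := by ring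
        _ ≤ μ * (a / 2) * ((c * t + a) / s) := this
        _ = a / 2 * (μ * (c * t + a) / s) := by ring
    have h2 : μ * (a - c) ≤ μ * s := by nlinarith
    linarith
end

section
/- Let a, b, μ > 0, and suppose the energy E satisfies μ·max{a, b} < E < μ·min{(2a² + b²)/(2a), (2b² + a²)/(2b)}. Define w(s) = √(a²cos²s + b²sin²s). Then for every s ∈ ℝ: E > μ·w(s) and μ·(a² + b² + a²cos²s + b²sin²s)/(2·w(s)) > E. -/
/-!
Write `W = w(s)` and `m = max a b`. Since `W²` is a convex combination of `a²` and `b²`, we have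
`0 < W ≤ m`, which gives the lower bound on `E`. For the upper bound, `W ↦ (a² + b² + W²)/(2W)`
is decreasing as long as `W·m ≤ a² + b²`, so its value at `W` dominates its value at `m`, and the
latter is one of the two terms of the `min` in the hypothesis.
-/

open Real

lemma sqrt_sq_mul_cos_sq_add_sq_mul_sin_sq_pos {a b : ℝ} (ha : 0 < a) (hb : 0 < b) (s : ℝ) :
    0 < √(a ^ 2 * cos s ^ 2 + b ^ 2 * sin s ^ 2) := by
  apply Real.sqrt_pos.2
  rcases eq_or_ne (cos s) 0 with hcos | hcos
  · have hsin : sin s ^ 2 = 1 := by simpa [hcos] using sin_sq_add_cos_sq s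
    rw [hcos, hsin]
    positivity
  · have : 0 < cos s ^ 2 := by positivity
    positivity

lemma sqrt_sq_mul_cos_sq_add_sq_mul_sin_sq_le_max {a b : ℝ} (ha : 0 ≤ a) (hb : 0 ≤ b) (s : ℝ) :
    √(a ^ 2 * cos s ^ 2 + b ^ 2 * sin s ^ 2) ≤ max a b := by
  rw [Real.sqrt_le_left (ha.trans (le_max_left a b))]
  have hac : a ^ 2 ≤ max a b ^ 2 := pow_le_pow_left₀ ha (le_max_left a b) 2
  have hbc : b ^ 2 ≤ max a b ^ 2 := pow_le_pow_left₀ hb (le_max_right a b) 2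
  nlinarith [sin_sq_add_cos_sq s, mul_le_mul_of_nonneg_right hac (sq_nonneg (cos s)),
    mul_le_mul_of_nonneg_right hbc (sq_nonneg (sin s))]

lemma add_sq_div_two_mul_le_of_le {K x y : ℝ} (hx : 0 < x) (hxy : x ≤ y) (hK : x * y ≤ K) :
    (K + y ^ 2) / (2 * y) ≤ (K + x ^ 2) / (2 * x) := by
  have hy : 0 < y := hx.trans_le hxy
  rw [div_le_div_iff₀ (by positivity) (by positivity)]
  nlinarith [mul_nonneg (sub_nonneg.2 hxy) (sub_nonneg.2 hK)]

lemma min_two_mul_sq_add_sq_div_le (a b : ℝ) :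
    min ((2 * a ^ 2 + b ^ 2) / (2 * a)) ((2 * b ^ 2 + a ^ 2) / (2 * b)) ≤
      (a ^ 2 + b ^ 2 + max a b ^ 2) / (2 * max a b) := by
  rcases max_choice a b with h | h <;> rw [h]
  · exact (min_le_left _ _).trans_eq (by ring)
  · exact (min_le_right _ _).trans_eq (by ring)

/-- Ellipsoidal scatterer in the linear potential: if
`μ max{a,b} < E < μ min{(2a²+b²)/(2a), (2b²+a²)/(2b)}`, then along the whole
boundary `E > μ w(s)` and `μ (a² + b² + a²cos²s + b²sin²s)/(2 w(s)) > E`,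
where `w(s) = √(a²cos²s + b²sin²s)`. -/
theorem stmt_11 (a b μ E : ℝ) (ha : 0 < a) (hb : 0 < b) (hμ : 0 < μ)
    (w : ℝ → ℝ)
    (hw : ∀ s, w s = Real.sqrt (a ^ 2 * Real.cos s ^ 2 + b ^ 2 * Real.sin s ^ 2))
    (hElow : μ * max a b < E)
    (hEhigh : E < μ * min ((2 * a ^ 2 + b ^ 2) / (2 * a)) ((2 * b ^ 2 + a ^ 2) / (2 * b))) :
    ∀ s : ℝ, E > μ * w s ∧
      μ * (a ^ 2 + b ^ 2 + a ^ 2 * Real.cos s ^ 2 + b ^ 2 * Real.sin s ^ 2) / (2 * w s) > E := by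
  intro s
  have hw_pos : 0 < w s := hw s ▸ sqrt_sq_mul_cos_sq_add_sq_mul_sin_sq_pos ha hb s
  have hw_le : w s ≤ max a b := hw s ▸ sqrt_sq_mul_cos_sq_add_sq_mul_sin_sq_le_max ha.le hb.le s
  have hw_sq : w s ^ 2 = a ^ 2 * cos s ^ 2 + b ^ 2 * sin s ^ 2 := by
    rw [hw, sq_sqrt (by positivity)]
  have hmax_sq : max a b ^ 2 ≤ a ^ 2 + b ^ 2 := by
    rcases max_choice a b with h | h <;> rw [h] <;> nlinarith
  have hw_mul_max : w s * max a b ≤ a ^ 2 + b ^ 2 := by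
    nlinarith [mul_le_mul_of_nonneg_right hw_le (hw_pos.le.trans hw_le)]
  refine ⟨(mul_le_mul_of_nonneg_left hw_le hμ.le).trans_lt hElow, ?_⟩
  calc E < μ * min ((2 * a ^ 2 + b ^ 2) / (2 * a)) ((2 * b ^ 2 + a ^ 2) / (2 * b)) := hEhigh
    _ ≤ μ * ((a ^ 2 + b ^ 2 + max a b ^ 2) / (2 * max a b)) :=
      mul_le_mul_of_nonneg_left (min_two_mul_sq_add_sq_div_le a b) hμ.le
    _ ≤ μ * ((a ^ 2 + b ^ 2 + w s ^ 2) / (2 * w s)) :=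
      mul_le_mul_of_nonneg_left (add_sq_div_two_mul_le_of_le hw_pos hw_le hw_mul_max) hμ.le
    _ = μ * (a ^ 2 + b ^ 2 + a ^ 2 * cos s ^ 2 + b ^ 2 * sin s ^ 2) / (2 * w s) := by
      rw [hw_sq]; ring
end
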